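/- On a Riemannian Π-manifold, the (0,3)-potential Q̇(x,y,z) = g(Ḋₓy − ∇ₓy, z) of the first natural connection satisfies Q̇(x,y,z) = −(1/2){F(x,φy,z) + η(z)F(x,φy,ξ)} + η(y)F(x,φz,ξ). -/

import Mathlib

/-! Unfolding `Ḋ` gives `Q̇(x,y,z) = −(1/2){F(x,φy,z) − (∇ₓη)(y) η(z)} − η(y) (∇ₓη)(z)` directly,
so everything reduces to `F(x,φy,ξ) = −(∇ₓη)(y)`. That identity comes from differentiating
`g(φ²y, ξ) = 0` along `x` and using `φ² = id − η ⊗ ξ` together with `g(∇ₓξ, ξ) = 0`. -/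

/-- Algebraic model of a Riemannian Π-manifold: `V` is the module of vector fields
over the commutative ring `C` of (smooth) functions, `g` the metric, `(phi, xi, eta)`
the Π-structure, `d` the directional-derivative action of vector fields on functions,
`nabla` the Levi-Civita connection (torsion-free w.r.t. the bracket `lie` and
metric-compatible), together with the standard identities of the Π-structure. -/
structure RPM (C : Type*) (V : Type*) [CommRing C] [Algebra ℝ C]
    [AddCommGroup V] [Module C V] where
  g : V →ₗ[C] V →ₗ[C] C
  phi : V →ₗ[C] V
  xi : V
  eta : V →ₗ[C] C
  d : V → C → C
  nabla : V → V → V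
  lie : V → V → V
  g_symm : ∀ x y, g x y = g y x
  phi_xi : phi xi = 0
  phi_sq : ∀ x, phi (phi x) = x - eta x • xi
  eta_phi : ∀ x, eta (phi x) = 0
  eta_xi : eta xi = 1
  g_phi_phi : ∀ x y, g (phi x) (phi y) = g x y - eta x * eta y
  g_phi : ∀ x y, g (phi x) y = g x (phi y)
  g_xi : ∀ x, g x xi = eta x
  d_one : ∀ x, d x 1 = 0
  d_mul : ∀ x f h, d x (f * h) = f * d x h + h * d x f
  nabla_add_left : ∀ x y z, nabla (x + y) z = nabla x z + nabla y z
  nabla_smul_left : ∀ (f : C) (x y : V), nabla (f • x) y = f • nabla x y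
  nabla_add_right : ∀ x y z, nabla x (y + z) = nabla x y + nabla x z
  nabla_leibniz : ∀ (x : V) (f : C) (y : V), nabla x (f • y) = d x f • y + f • nabla x y
  torsion_free : ∀ x y, nabla x y - nabla y x = lie x y
  metric_compat : ∀ x y z, d x (g y z) = g (nabla x y) z + g y (nabla x z)

namespace RPM

variable {C : Type*} {V : Type*} [CommRing C] [Algebra ℝ C] [AddCommGroup V] [Module C V]

/-- The fundamental tensor `F(x,y,z) = g((∇ₓφ)y, z)`. -/
def F (M : RPM C V) (x y z : V) : C :=
  M.g (M.nabla x (M.phi y) - M.phi (M.nabla x y)) z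

/-- The constant function 1/2. -/
noncomputable def half (M : RPM C V) : C := algebraMap ℝ C (1 / 2)

/-- The first natural connection
`Ḋₓy = ∇ₓy − (1/2){(∇ₓφ)(φy) − (∇ₓη)(y)·ξ} − η(y)∇ₓξ`, where
`(∇ₓφ)(φy) = ∇ₓ(φ²y) − φ(∇ₓ(φy))` and `(∇ₓη)(y) = g(∇ₓξ, y)`. -/
noncomputable def D1 (M : RPM C V) (x y : V) : V :=
  M.nabla x y
    - M.half • ((M.nabla x (M.phi (M.phi y)) - M.phi (M.nabla x (M.phi y)))
        - M.g (M.nabla x M.xi) y • M.xi)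
    - M.eta y • M.nabla x M.xi

/-- The torsion of the first natural connection. -/
noncomputable def T1 (M : RPM C V) (x y : V) : V := M.D1 x y - M.D1 y x - M.lie x y

/-- The Lee form ω = F(ξ,ξ,·). -/
def omegaF (M : RPM C V) (z : V) : C := M.F M.xi M.xi z

end RPM

open RPM

variable {C : Type*} {V : Type*} [CommRing C] [Algebra ℝ C] [AddCommGroup V] [Module C V]

namespace RPM

variable (M : RPM C V)

theorem d_zero (x : V) : M.d x 0 = 0 := by
  simpa using M.d_mul x 0 0

theorem half_add_half : M.half + M.half = 1 := by
  rw [half, ← map_add]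
  norm_num

theorem g_nabla_of_g_eq_zero {u w : V} (h : M.g u w = 0) (x : V) :
    M.g (M.nabla x u) w = -M.g u (M.nabla x w) := by
  have h' := M.metric_compat x u w
  rw [h, M.d_zero] at h'
  linear_combination -h'

-- `g(ξ, ξ) = 1` only yields `2 g(∇ₓξ, ξ) = 0`; the `ℝ`-algebra structure lets us cancel the `2`.
theorem g_nabla_xi_xi (x : V) : M.g (M.nabla x M.xi) M.xi = 0 := by
  have h := M.metric_compat x M.xi M.xi
  rw [M.g_xi, M.eta_xi, M.d_one, M.g_symm M.xi] at h
  calc M.g (M.nabla x M.xi) M.xi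
      = (M.half + M.half) * M.g (M.nabla x M.xi) M.xi := by rw [half_add_half, one_mul]
    _ = M.half * (M.g (M.nabla x M.xi) M.xi + M.g (M.nabla x M.xi) M.xi) := by ring
    _ = 0 := by rw [← h, mul_zero]

theorem g_phi_xi (y : V) : M.g (M.phi y) M.xi = 0 := by
  rw [g_xi, eta_phi]

theorem F_phi_xi (x y : V) : M.F x (M.phi y) M.xi = -M.g (M.nabla x M.xi) y := by
  rw [F, map_sub, LinearMap.sub_apply, g_phi_xi, sub_zero,
    M.g_nabla_of_g_eq_zero (M.g_phi_xi _), phi_sq, map_sub, map_smul, LinearMap.sub_apply,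
    LinearMap.smul_apply, M.g_symm M.xi, g_nabla_xi_xi, smul_zero, sub_zero, M.g_symm y]

theorem g_D1_sub_nabla (x y z : V) :
    M.g (M.D1 x y - M.nabla x y) z
      = -M.half * (M.F x (M.phi y) z - M.g (M.nabla x M.xi) y * M.eta z)
        - M.eta y * M.g (M.nabla x M.xi) z := by
  simp only [D1, F, map_sub, map_smul, LinearMap.sub_apply, LinearMap.smul_apply, smul_eq_mul,
    M.g_symm M.xi z, g_xi]
  ring

end RPM

/-- The (0,3)-potential of the first natural connection satisfies
`Q̇(x,y,z) = −(1/2){F(x,φy,z) + η(z)F(x,φy,ξ)} + η(y)F(x,φz,ξ)`. -/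
theorem stmt12 (M : RPM C V) :
    ∀ x y z : V,
      M.g (M.D1 x y - M.nabla x y) z
        = - M.half * (M.F x (M.phi y) z + M.eta z * M.F x (M.phi y) M.xi)
          + M.eta y * M.F x (M.phi z) M.xi := by
  intro x y z
  rw [M.g_D1_sub_nabla, M.F_phi_xi, M.F_phi_xi]
  ring
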